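/- Let g: X → X be measurable on a probability space (X, μ), μ-invariant and suppose a measurable non-negative function φ: X → [0, ∞] satisfies φ(x) = h(g(x)) − h(x) + c for a measurable function h and a constant c. Then φ ∈ L¹(μ) and ∫ φ dμ = c. (Integrability of a non-negative measurable coboundary-plus-constant.) -/

import Mathlib

/-!
Truncating `h` at level `n` gives a bounded measurable `hₙ`, so `∫ (hₙ ∘ g - hₙ) dμ = 0` by
invariance of `μ`. Truncation is monotone and 1-Lipschitz, hence `ψₙ := hₙ ∘ g - hₙ + c` lies
between `c` and `φ`, and `ψₙ = φ` pointwise once `n` is large. As `φ ≥ 0`, `|ψₙ| ≤ ψₙ + 2|c|`, so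
Fatou bounds `∫ |φ|`; then dominated convergence with `|ψₙ| ≤ φ + |c|` gives
`∫ φ = lim ∫ ψₙ = c`.
-/

open MeasureTheory Filter Topology Set

noncomputable def truncate (n t : ℝ) : ℝ := max (-n) (min t n)

lemma truncate_monotone (n : ℝ) : Monotone (truncate n) :=
  fun _ _ hab => max_le_max le_rfl (min_le_min hab le_rfl)

lemma lipschitzWith_truncate (n : ℝ) : LipschitzWith 1 (truncate n) :=
  (LipschitzWith.id.min_const n).const_max (-n)

lemma measurable_truncate (n : ℝ) : Measurable (truncate n) :=
  (lipschitzWith_truncate n).continuous.measurable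

lemma abs_truncate_le {n : ℝ} (hn : 0 ≤ n) (t : ℝ) : |truncate n t| ≤ n :=
  abs_le.2 ⟨le_max_left _ _, max_le (by linarith) (min_le_right _ _)⟩

lemma truncate_of_abs_le {n t : ℝ} (ht : |t| ≤ n) : truncate n t = t := by
  rw [abs_le] at ht
  rw [truncate, min_eq_left ht.2, max_eq_right ht.1]

lemma Monotone.sub_mem_uIcc_of_lipschitzWith_one {T : ℝ → ℝ} (hT : Monotone T)
    (hT' : LipschitzWith 1 T) (a b : ℝ) : T a - T b ∈ uIcc 0 (a - b) := by
  have hdist : |T a - T b| ≤ |a - b| := by simpa [Real.dist_eq] using hT'.dist_le_mul a b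
  rcases le_total b a with hba | hab
  · exact mem_uIcc.2 <| .inl ⟨sub_nonneg.2 (hT hba),
      (le_abs_self _).trans <| hdist.trans_eq (abs_of_nonneg (sub_nonneg.2 hba))⟩
  · exact mem_uIcc.2 <| .inr
      ⟨by linarith [neg_abs_le (T a - T b), abs_of_nonpos (sub_nonpos.2 hab)], sub_nonpos.2 (hT hab)⟩

theorem MeasureTheory.MeasurePreserving.integral_comp_of_aestronglyMeasurable {X Y E : Type*}
    [MeasurableSpace X] [MeasurableSpace Y] [NormedAddCommGroup E] [NormedSpace ℝ E]
    {μ : Measure X} {ν : Measure Y} {g : X → Y} (hg : MeasurePreserving g μ ν) {F : Y → E}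
    (hF : AEStronglyMeasurable F ν) : ∫ x, F (g x) ∂μ = ∫ y, F y ∂ν := by
  rw [← hg.map_eq] at hF ⊢
  exact (integral_map hg.measurable.aemeasurable hF).symm

theorem integrable_of_tendsto_of_integral_norm_le {X E : Type*} [MeasurableSpace X]
    [NormedAddCommGroup E] {μ : Measure X} {f : ℕ → X → E} {F : X → E} {C : ℝ}
    (hf : ∀ n, Integrable (f n) μ) (hfF : ∀ᵐ x ∂μ, Tendsto (f · x) atTop (𝓝 (F x)))
    (hC : ∀ n, ∫ x, ‖f n x‖ ∂μ ≤ C) : Integrable F μ := by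
  refine ⟨aestronglyMeasurable_of_tendsto_ae _ (fun n => (hf n).aestronglyMeasurable) hfF, ?_⟩
  have fatou : ∫⁻ x, ‖F x‖ₑ ∂μ ≤ liminf (fun n => ∫⁻ x, ‖f n x‖ₑ ∂μ) atTop :=
    lintegral_congr_ae (by filter_upwards [hfF] with x hx using hx.enorm.liminf_eq) ▸
      lintegral_liminf_le' fun n => (hf n).aestronglyMeasurable.enorm
  have bound (n : ℕ) : ∫⁻ x, ‖f n x‖ₑ ∂μ ≤ ENNReal.ofReal C := by
    rw [← ofReal_integral_norm_eq_lintegral_enorm (hf n)]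
    exact ENNReal.ofReal_le_ofReal (hC n)
  exact fatou.trans_lt <|
    (liminf_le_of_frequently_le' (Frequently.of_forall bound)).trans_lt ENNReal.ofReal_lt_top

theorem integrable_of_tendsto_of_integral_le {X : Type*} [MeasurableSpace X] {μ : Measure X}
    [IsFiniteMeasure μ] {f : ℕ → X → ℝ} {F : X → ℝ} {b C : ℝ} (hf : ∀ n, Integrable (f n) μ)
    (hfF : ∀ᵐ x ∂μ, Tendsto (f · x) atTop (𝓝 (F x))) (hb : ∀ n, ∀ᵐ x ∂μ, b ≤ f n x)
    (hC : ∀ n, ∫ x, f n x ∂μ ≤ C) : Integrable F μ := by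
  refine integrable_of_tendsto_of_integral_norm_le hf hfF (C := C + 2 * |b| * μ.real univ)
    fun n => ?_
  calc ∫ x, ‖f n x‖ ∂μ ≤ ∫ x, (f n x + 2 * |b|) ∂μ := by
        refine integral_mono_ae (hf n).norm ((hf n).add (integrable_const _)) ?_
        filter_upwards [hb n] with x hx
        exact abs_le.2 ⟨by linarith [neg_abs_le b], by linarith [abs_nonneg b]⟩
    _ ≤ C + 2 * |b| * μ.real univ := by
        rw [integral_add (hf n) (integrable_const _), integral_const, smul_eq_mul, mul_comm]
        linarith [hC n]

lemma integrable_truncate_comp {X : Type*} [MeasurableSpace X] {μ : Measure X}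
    [IsFiniteMeasure μ] {n : ℝ} (hn : 0 ≤ n) {f : X → ℝ} (hf : Measurable f) :
    Integrable (fun x => truncate n (f x)) μ :=
  .of_bound ((measurable_truncate n).comp hf).aestronglyMeasurable n
    (ae_of_all _ fun x => abs_truncate_le hn (f x))

section TruncatedCoboundary

variable {X : Type*} {g : X → X} {h : X → ℝ}

noncomputable def truncCoboundary (g : X → X) (h : X → ℝ) (n : ℝ) (x : X) : ℝ :=
  truncate n (h (g x)) - truncate n (h x)

lemma truncCoboundary_mem_uIcc (n : ℝ) (x : X) :
    truncCoboundary g h n x ∈ uIcc 0 (h (g x) - h x) :=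
  (truncate_monotone n).sub_mem_uIcc_of_lipschitzWith_one (lipschitzWith_truncate n) _ _

lemma eventually_truncCoboundary_eq (g : X → X) (h : X → ℝ) (x : X) :
    ∀ᶠ n : ℕ in atTop, truncCoboundary g h n x = h (g x) - h x := by
  filter_upwards [eventually_ge_atTop ⌈max |h (g x)| |h x|⌉₊] with n hn
  have hn' : max |h (g x)| |h x| ≤ n := Nat.ceil_le.1 hn
  rw [truncCoboundary, truncate_of_abs_le (le_of_max_le_left hn'),
    truncate_of_abs_le (le_of_max_le_right hn')]

variable [MeasurableSpace X] {μ : Measure X} [IsFiniteMeasure μ] {n : ℝ}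

lemma integrable_truncCoboundary (hg : Measurable g) (hh : Measurable h) (hn : 0 ≤ n) :
    Integrable (truncCoboundary g h n) μ :=
  (integrable_truncate_comp hn (hh.comp hg)).sub (integrable_truncate_comp hn hh)

lemma integral_truncCoboundary (hg : MeasurePreserving g μ μ) (hh : Measurable h)
    (hn : 0 ≤ n) : ∫ x, truncCoboundary g h n x ∂μ = 0 := by
  have hint : Integrable (fun x => truncate n (h x)) μ := integrable_truncate_comp hn hh
  have hint_g : Integrable (fun x => truncate n (h (g x))) μ :=
    integrable_truncate_comp hn (hh.comp hg.measurable)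
  simp only [truncCoboundary]
  rw [integral_sub hint_g hint, hg.integral_comp_of_aestronglyMeasurable
    (F := fun y => truncate n (h y)) hint.aestronglyMeasurable, sub_self]

end TruncatedCoboundary

theorem stmt12_general {X : Type*} [MeasurableSpace X] (μ : Measure X) [IsProbabilityMeasure μ]
    (g : X → X) (hg : MeasurePreserving g μ μ)
    (φ h : X → ℝ) (hhm : Measurable h)
    (c : ℝ) (hφ0 : ∀ x, 0 ≤ φ x) (hco : ∀ x, φ x = h (g x) - h x + c) :
    Integrable φ μ ∧ ∫ x, φ x ∂μ = c := by
  set ψ : ℕ → X → ℝ := fun n x => truncCoboundary g h n x + c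
  have hψ_int (n : ℕ) : Integrable (ψ n) μ :=
    (integrable_truncCoboundary hg.measurable hhm n.cast_nonneg).add (integrable_const c)
  have hψ_integral (n : ℕ) : ∫ x, ψ n x ∂μ = c := by
    rw [integral_add (integrable_truncCoboundary hg.measurable hhm n.cast_nonneg)
      (integrable_const c), integral_truncCoboundary hg hhm n.cast_nonneg]
    simp
  have hψ_lim (x : X) : Tendsto (ψ · x) atTop (𝓝 (φ x)) :=
    tendsto_const_nhds.congr' <| (eventually_truncCoboundary_eq g h x).mono fun n hn => by
      simp only [ψ, hn, hco x]
  have hψ_bounds (n : ℕ) (x : X) : -|c| ≤ ψ n x ∧ ‖ψ n x‖ ≤ φ x + |c| := by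
    have hmem := truncCoboundary_mem_uIcc (g := g) (h := h) n x
    rw [mem_uIcc] at hmem
    rw [Real.norm_eq_abs, abs_le]
    refine ⟨?_, ?_, ?_⟩ <;> rcases hmem with hmem | hmem <;>
      linarith [hφ0 x, hco x, neg_abs_le c, le_abs_self c]
  have hφ_int : Integrable φ μ :=
    integrable_of_tendsto_of_integral_le hψ_int (ae_of_all _ hψ_lim)
      (fun n => ae_of_all _ fun x => (hψ_bounds n x).1) fun n => (hψ_integral n).le
  have hψ_integral_lim : Tendsto (fun n => ∫ x, ψ n x ∂μ) atTop (𝓝 (∫ x, φ x ∂μ)) :=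
    tendsto_integral_of_dominated_convergence (fun x => φ x + |c|)
      (fun n => (hψ_int n).aestronglyMeasurable) (hφ_int.add (integrable_const _))
      (fun n => ae_of_all _ fun x => (hψ_bounds n x).2) (ae_of_all _ hψ_lim)
  simp only [hψ_integral] at hψ_integral_lim
  exact ⟨hφ_int, tendsto_nhds_unique hψ_integral_lim tendsto_const_nhds⟩

/-- **Integrability of a non-negative measurable coboundary-plus-constant.**
If `g` preserves a probability measure `μ`, and a non-negative measurable function
`φ` satisfies `φ(x) = h(g x) − h(x) + c` for a measurable `h` and a constant `c`,
then `φ` is integrable with `∫ φ dμ = c`. -/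
theorem stmt12 {X : Type*} [MeasurableSpace X] (μ : Measure X) [IsProbabilityMeasure μ]
    (g : X → X) (hg : MeasurePreserving g μ μ)
    (φ h : X → ℝ) (hφm : Measurable φ) (hhm : Measurable h)
    (c : ℝ) (hφ0 : ∀ x, 0 ≤ φ x) (hco : ∀ x, φ x = h (g x) - h x + c) :
    Integrable φ μ ∧ ∫ x, φ x ∂μ = c :=
  stmt12_general μ g hg φ h hhm c hφ0 hco
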